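/- arXiv:2401.12763 — 3 statements merged into one kernel-verified Lean document; each statement's English description precedes it below -/
import Mathlib

section
/- In the setting of the previous construction (U = (A,Ũ) uniform on {0,1}², σ ~ Bernoulli(α) independent of U and the uniform state S, Ṽ = A·σ, V = (Ṽ,σ), T = S⁽Ṽ⁾, X = (A, Ũ ⊕ T)), the conditional mutual information satisfies I(U; X | V, T) = 2 − α bits. -/
open scoped BigOperators Classical
open Real Finset

noncomputable section

/-- A probability mass function on a finite sample space. -/
structure FinProb (Ω : Type*) [Fintype Ω] where
  p : Ω → ℝ
  nonneg : ∀ ω, 0 ≤ p ω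
  sum_one : ∑ ω, p ω = 1

namespace FinProb

variable {Ω : Type*} [Fintype Ω]

/-- Probability of an event. -/
def pr (μ : FinProb Ω) (E : Ω → Prop) : ℝ := ∑ ω, if E ω then μ.p ω else 0

/-- Distribution of a random variable. -/
def dist (μ : FinProb Ω) {α : Type*} [Fintype α] (X : Ω → α) (x : α) : ℝ :=
  μ.pr (fun ω => X ω = x)

/-- Shannon entropy (in bits) of a finite random variable. -/
def H (μ : FinProb Ω) {α : Type*} [Fintype α] (X : Ω → α) : ℝ :=
  ∑ x, -(μ.dist X x) * Real.logb 2 (μ.dist X x)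

/-- Joint entropy H(X,Y). -/
def H2 (μ : FinProb Ω) {α β : Type*} [Fintype α] [Fintype β] (X : Ω → α) (Y : Ω → β) : ℝ :=
  μ.H (fun ω => (X ω, Y ω))

/-- Conditional entropy H(X|Y). -/
def condH (μ : FinProb Ω) {α β : Type*} [Fintype α] [Fintype β] (X : Ω → α) (Y : Ω → β) : ℝ :=
  μ.H2 X Y - μ.H Y

/-- Mutual information I(X;Y) in bits. -/
def mi (μ : FinProb Ω) {α β : Type*} [Fintype α] [Fintype β] (X : Ω → α) (Y : Ω → β) : ℝ :=
  μ.H X + μ.H Y - μ.H2 X Y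

/-- Conditional mutual information I(X;Y|Z) in bits. -/
def cmi (μ : FinProb Ω) {α β γ : Type*} [Fintype α] [Fintype β] [Fintype γ]
    (X : Ω → α) (Y : Ω → β) (Z : Ω → γ) : ℝ :=
  μ.H2 X Z + μ.H2 Y Z - μ.H (fun ω => (X ω, Y ω, Z ω)) - μ.H Z

/-- Conditional probability of event `A` given event `E`. -/
def cpr (μ : FinProb Ω) (A E : Ω → Prop) : ℝ :=
  μ.pr (fun ω => A ω ∧ E ω) / μ.pr E

/-- Conditional distribution of `X` given the event `E`. -/
def distCond (μ : FinProb Ω) {α : Type*} [Fintype α] (X : Ω → α) (E : Ω → Prop) (x : α) : ℝ :=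
  μ.cpr (fun ω => X ω = x) E

/-- Entropy of `X` under the conditional distribution given the event `E`. -/
def entCond (μ : FinProb Ω) {α : Type*} [Fintype α] (X : Ω → α) (E : Ω → Prop) : ℝ :=
  ∑ x, -(μ.distCond X E x) * Real.logb 2 (μ.distCond X E x)

/-- Conditional entropy H(X | T, E): entropy of `X` given the random variable `T`,
all within the event `E` (averaged over `T` with conditional weights). -/
def condHOn (μ : FinProb Ω) {α β : Type*} [Fintype α] [Fintype β]
    (X : Ω → α) (T : Ω → β) (E : Ω → Prop) : ℝ :=
  ∑ t, μ.cpr (fun ω => T ω = t) E * μ.entCond X (fun ω => T ω = t ∧ E ω)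

end FinProb

/-! Given `Z = (V, T)`, the pair `U = (A, Ũ)` and `X = (A, Ũ ⊕ T)` determine each other, so
`I(U; X | Z) = H(U | Z) = H(U, Z) - H(Z)`. Both entropies are read off the explicit joint law:
when `σ = 0` nothing of `U` is revealed (2 bits remain), and when `σ = 1` the side information
reveals `A = Ṽ`, leaving only `Ũ` (1 bit); averaging gives `2(1 - α) + α`. -/

namespace FinProb

variable {Ω : Type*} [Fintype Ω] (μ : FinProb Ω) {β γ : Type*} [Fintype β] [Fintype γ]

theorem dist_comp (W : Ω → β) (f : β → γ) (y : γ) :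
    μ.dist (fun ω => f (W ω)) y = ∑ w, if f w = y then μ.dist W w else 0 := by
  calc μ.dist (fun ω => f (W ω)) y
      = ∑ ω, ∑ w, if W ω = w then (if f w = y then μ.p ω else 0) else 0 := by
        simp only [Finset.sum_ite_eq, Finset.mem_univ, if_true]; rfl
    _ = ∑ w, ∑ ω, if W ω = w then (if f w = y then μ.p ω else 0) else 0 := Finset.sum_comm
    _ = _ := Finset.sum_congr rfl fun w _ => by
        by_cases hw : f w = y <;> simp [hw, dist, pr]

theorem dist_comp_of_injective (W : Ω → β) {f : β → γ} (hf : f.Injective) (w : β) :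
    μ.dist (fun ω => f (W ω)) (f w) = μ.dist W w := by
  simp only [dist, hf.eq_iff]

theorem dist_eq_zero_of_notMem_range (W : Ω → β) {y : β} (hy : y ∉ Set.range W) :
    μ.dist W y = 0 := by
  simp only [dist, pr]
  exact Finset.sum_eq_zero fun ω _ => if_neg fun h => hy ⟨ω, h⟩

theorem H_comp_of_injective (W : Ω → β) {f : β → γ} (hf : f.Injective) :
    μ.H (fun ω => f (W ω)) = μ.H W := by
  refine (Fintype.sum_of_injective f hf _ _ (fun y hy => ?_) fun w => ?_).symm
  · rw [dist_eq_zero_of_notMem_range]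
    · simp
    · rintro ⟨ω, rfl⟩
      exact hy ⟨W ω, rfl⟩
  · rw [dist_comp_of_injective μ W hf]

theorem cmi_eq_condH_of_determined {δ : Type*} [Fintype δ] (U : Ω → β) (X : Ω → γ) (Z : Ω → δ)
    (g : β → δ → γ) (h : γ → δ → β) (hX : ∀ ω, X ω = g (U ω) (Z ω))
    (hU : ∀ ω, U ω = h (X ω) (Z ω)) :
    μ.cmi U X Z = μ.condH U Z := by
  have hUZ : μ.H (fun ω => (U ω, X ω, Z ω)) = μ.H2 U Z := by
    have hinj : (fun p : β × δ => (p.1, g p.1 p.2, p.2)).Injective := fun p q hpq =>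
      Prod.ext (congrArg (·.1) hpq) (congrArg (·.2.2) hpq)
    simp only [hX]
    exact μ.H_comp_of_injective (fun ω => (U ω, Z ω)) hinj
  have hXZ : μ.H (fun ω => (U ω, X ω, Z ω)) = μ.H2 X Z := by
    have hinj : (fun p : γ × δ => (h p.1 p.2, p.1, p.2)).Injective := fun p q hpq =>
      Prod.ext (congrArg (·.2.1) hpq) (congrArg (·.2.2) hpq)
    simp only [hU]
    exact μ.H_comp_of_injective (fun ω => (X ω, Z ω)) hinj
  rw [cmi, condH]
  linarith

theorem H_comp_eq_of_dist_eq (W : Ω → β) {q : β → ℝ} (hW : ∀ w, μ.dist W w = q w) (f : β → γ) :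
    μ.H (fun ω => f (W ω)) =
      ∑ y, -(∑ w, if f w = y then q w else 0) * logb 2 (∑ w, if f w = y then q w else 0) := by
  simp only [H, dist_comp, hW]

end FinProb

theorem mul_logb_two_div_two_pow (x : ℝ) (k : ℕ) :
    x * logb 2 (x / 2 ^ k) = x * logb 2 x - k * x := by
  rcases eq_or_ne x 0 with rfl | hx
  · simp
  · rw [logb_div hx (by positivity), logb_pow, logb_self_eq_one one_lt_two]; ring

def jointLaw (α : ℝ) (w : Bool × Bool × Bool × (Bool × Bool)) : ℝ :=
  1 / 4 * (if w.2.2.1 then α else 1 - α) * (1 / 4)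

section Construction

variable {Ω : Type} [Fintype Ω] (μ : FinProb Ω) (α : ℝ) (A Ut σv : Ω → Bool) (S : Ω → Bool × Bool)

theorem dist_joint_eq_jointLaw
    (hjoint : ∀ (a u b : Bool) (s : Bool × Bool),
      μ.pr (fun ω => A ω = a ∧ Ut ω = u ∧ σv ω = b ∧ S ω = s)
        = 1 / 4 * (if b then α else 1 - α) * (1 / 4))
    (w : Bool × Bool × Bool × (Bool × Bool)) :
    μ.dist (fun ω => (A ω, Ut ω, σv ω, S ω)) w = jointLaw α w := by
  simpa only [FinProb.dist, Prod.ext_iff, jointLaw] using hjoint w.1 w.2.1 w.2.2.1 w.2.2.2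

theorem H_VT_eq (hW : ∀ w, μ.dist (fun ω => (A ω, Ut ω, σv ω, S ω)) w = jointLaw α w) :
    μ.H (fun ω => (((if σv ω then A ω else false), σv ω),
      if (if σv ω then A ω else false) then (S ω).2 else (S ω).1)) =
      -((1 - α) * logb 2 ((1 - α) / 2 ^ 1)) - α * logb 2 (α / 2 ^ 2) := by
  refine (μ.H_comp_eq_of_dist_eq _ hW
    fun w => ((if w.2.2.1 then w.1 else false, w.2.2.1),
      if (if w.2.2.1 then w.1 else false) then w.2.2.2.2 else w.2.2.2.1)).trans ?_
  simp only [jointLaw, Fintype.sum_prod_type, Fintype.sum_bool]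
  norm_num
  ring_nf

theorem H_U_VT_eq
    (hW : ∀ w, μ.dist (fun ω => (A ω, Ut ω, σv ω, S ω)) w = jointLaw α w) :
    μ.H (fun ω => ((A ω, Ut ω), (((if σv ω then A ω else false), σv ω),
      if (if σv ω then A ω else false) then (S ω).2 else (S ω).1))) =
      -((1 - α) * logb 2 ((1 - α) / 2 ^ 3)) - α * logb 2 (α / 2 ^ 3) := by
  refine (μ.H_comp_eq_of_dist_eq _ hW
    fun w => ((w.1, w.2.1), ((if w.2.2.1 then w.1 else false, w.2.2.1),
      if (if w.2.2.1 then w.1 else false) then w.2.2.2.2 else w.2.2.2.1))).trans ?_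
  simp only [jointLaw, Fintype.sum_prod_type, Fintype.sum_bool]
  norm_num
  ring_nf

end Construction

theorem stmt5_general {Ω : Type} [Fintype Ω] (μ : FinProb Ω) (α : ℝ)
    (A Ut σv : Ω → Bool) (S : Ω → Bool × Bool)
    (hjoint : ∀ (a u b : Bool) (s : Bool × Bool),
      μ.pr (fun ω => A ω = a ∧ Ut ω = u ∧ σv ω = b ∧ S ω = s)
        = 1 / 4 * (if b then α else 1 - α) * (1 / 4)) :
    let Vt : Ω → Bool := fun ω => if σv ω then A ω else false
    let T : Ω → Bool := fun ω => if Vt ω then (S ω).2 else (S ω).1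
    let X : Ω → Bool × Bool := fun ω => (A ω, xor (Ut ω) (T ω))
    μ.cmi (fun ω => (A ω, Ut ω)) X (fun ω => ((Vt ω, σv ω), T ω)) = 2 - α := by
  intro Vt T X
  have hW := dist_joint_eq_jointLaw μ α A Ut σv S hjoint
  rw [μ.cmi_eq_condH_of_determined _ X _ (fun u z => (u.1, xor u.2 z.2))
    (fun x z => (x.1, xor x.2 z.2)) (fun _ => rfl) (fun ω => by simp [X]), FinProb.condH,
    FinProb.H2, H_U_VT_eq μ α A Ut σv S hW, H_VT_eq μ α A Ut σv S hW]
  simp only [mul_logb_two_div_two_pow]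
  push_cast
  ring

/-- In the same construction (`U = (A,Ũ)` uniform, `σ ~ Bernoulli(α)`,
`Ṽ = A·σ`, `V = (Ṽ,σ)`, `T = S⁽Ṽ⁾`, `X = (A, Ũ ⊕ T)`), one has
`I(U; X | V, T) = 2 − α` bits. -/
theorem stmt5 {Ω : Type} [Fintype Ω] (μ : FinProb Ω) (α : ℝ) (hα : α ∈ Set.Icc (0 : ℝ) 1)
    (A Ut σv : Ω → Bool) (S : Ω → Bool × Bool)
    (hjoint : ∀ (a u b : Bool) (s : Bool × Bool),
      μ.pr (fun ω => A ω = a ∧ Ut ω = u ∧ σv ω = b ∧ S ω = s)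
        = 1 / 4 * (if b then α else 1 - α) * (1 / 4)) :
    let Vt : Ω → Bool := fun ω => if σv ω then A ω else false
    let T : Ω → Bool := fun ω => if Vt ω then (S ω).2 else (S ω).1
    let X : Ω → Bool × Bool := fun ω => (A ω, xor (Ut ω) (T ω))
    μ.cmi (fun ω => (A ω, Ut ω)) X (fun ω => ((Vt ω, σv ω), T ω)) = 2 - α :=
  stmt5_general μ α A Ut σv S hjoint
end
end

section
/- Let M, X, S, Y, T be random variables (X = X^n, S = S^n, Y^n sequences) such that M — (Xⁿ, Sⁿ) — Yⁿ is a Markov chain, Sⁿ is independent of M, for each i the symbol T_i is a deterministic function of (X^{i−1}, S^i), and X_i is a deterministic function of (M, T^i). Then I(M; Yⁿ) ≤ Σ_{i=1}^n I(M, Y^{i−1}; X_i | S^{i−1}, X^{i−1}, T_i). -/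
open scoped BigOperators Classical
open Real Finset

noncomputable section

/-!
Since `M — (Xⁿ, Sⁿ) — Yⁿ`, data processing gives `I(M; Yⁿ) ≤ I(M; Xⁿ, Sⁿ)`, and since
`Sⁿ ⫫ M` the latter is `I(M; Xⁿ | Sⁿ) ≤ H(Xⁿ | Sⁿ)`. The chain rule splits `H(Xⁿ | Sⁿ)` into
`Σᵢ H(X_i | X^{i−1}, Sⁿ)`, and replacing the condition by its function `(S^{i−1}, X^{i−1}, T_i)`
can only increase each term. Finally `X_i` is a function of `M` and `(S^{i−1}, X^{i−1}, T_i)`,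
because every earlier `T_j` is computed from the past of `X` and `S`; hence
`H(X_i | S^{i−1}, X^{i−1}, T_i) = I(M, Y^{i−1}; X_i | S^{i−1}, X^{i−1}, T_i)`.
-/

lemma sub_div_log_two_le_mul_logb {p a b c : ℝ} (hp : 0 ≤ p) (hpa : p ≤ a) (hpb : p ≤ b)
    (hpc : p ≤ c) :
    (p - a * b / c) / Real.log 2
      ≤ p * (Real.logb 2 p + Real.logb 2 c - Real.logb 2 a - Real.logb 2 b) := by
  have hlog2 : 0 < Real.log 2 := Real.log_pos one_lt_two
  rcases hp.eq_or_lt with rfl | hp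
  · have : 0 ≤ a * b / c := by positivity
    simp only [zero_sub, zero_mul]
    exact div_nonpos_of_nonpos_of_nonneg (by linarith) hlog2.le
  have ha : 0 < a := hp.trans_le hpa
  have hb : 0 < b := hp.trans_le hpb
  have hc : 0 < c := hp.trans_le hpc
  -- `1 - x⁻¹ ≤ log x` at `x = p c / (a b)`, multiplied by `p`
  have hx := Real.one_sub_inv_le_log_of_pos (x := p * c / (a * b)) (by positivity)
  rw [Real.log_div (by positivity) (by positivity), Real.log_mul hp.ne' hc.ne',
    Real.log_mul ha.ne' hb.ne'] at hx
  have hlhs : p - a * b / c = p * (1 - (p * c / (a * b))⁻¹) := by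
    field_simp
  have hrhs : p * (Real.logb 2 p + Real.logb 2 c - Real.logb 2 a - Real.logb 2 b)
      = p * (Real.log p + Real.log c - (Real.log a + Real.log b)) / Real.log 2 := by
    unfold Real.logb; ring
  rw [hlhs, hrhs]
  exact div_le_div_of_nonneg_right (mul_le_mul_of_nonneg_left hx hp.le) hlog2.le

namespace FinProb

variable {Ω : Type*} [Fintype Ω] (μ : FinProb Ω)
  {α β γ : Type*} [Fintype α] [Fintype β] [Fintype γ]

lemma pr_congr {E F : Ω → Prop} (h : ∀ ω, E ω ↔ F ω) : μ.pr E = μ.pr F := by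
  rw [funext fun ω => propext (h ω)]

lemma pr_nonneg (E : Ω → Prop) : 0 ≤ μ.pr E :=
  Finset.sum_nonneg fun ω _ => by split_ifs <;> simp [μ.nonneg ω]

lemma pr_mono {E F : Ω → Prop} (h : ∀ ω, E ω → F ω) : μ.pr E ≤ μ.pr F :=
  Finset.sum_le_sum fun ω _ => by
    by_cases hE : E ω
    · simp [hE, h ω hE]
    · by_cases hF : F ω <;> simp [hE, hF, μ.nonneg ω]

lemma dist_nonneg (X : Ω → α) (x : α) : 0 ≤ μ.dist X x :=
  μ.pr_nonneg _

lemma sum_dist (X : Ω → α) : ∑ x, μ.dist X x = 1 := by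
  unfold dist pr
  rw [Finset.sum_comm, ← μ.sum_one]
  simp

lemma sum_dist_pair_left (A : Ω → α) (C : Ω → γ) (c : γ) :
    ∑ a, μ.dist (fun ω => (A ω, C ω)) (a, c) = μ.dist C c := by
  unfold dist pr
  rw [Finset.sum_comm]
  refine Finset.sum_congr rfl fun ω _ => ?_
  by_cases h : C ω = c <;> simp [h]

section Relabel

variable {V : Ω → α} {W : Ω → β} {g : α → β}

lemma dist_le_dist_of_comp (hW : ∀ ω, W ω = g (V ω)) (a : α) :
    μ.dist V a ≤ μ.dist W (g a) :=
  μ.pr_mono fun ω h => by rw [hW ω, h]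

lemma dist_eq_sum_of_comp (hW : ∀ ω, W ω = g (V ω)) (b : β) :
    μ.dist W b = ∑ a, if g a = b then μ.dist V a else 0 := by
  unfold dist pr
  have h : ∀ a, (if g a = b then ∑ ω, (if V ω = a then μ.p ω else 0) else 0)
      = ∑ ω, if V ω = a ∧ g a = b then μ.p ω else 0 := fun a => by
    split_ifs with hab <;> simp [hab]
  rw [Finset.sum_congr rfl fun a _ => h a, Finset.sum_comm]
  simp [ite_and, hW]

lemma H_eq_sum_of_comp (hW : ∀ ω, W ω = g (V ω)) :
    μ.H W = ∑ a, -(μ.dist V a) * Real.logb 2 (μ.dist W (g a)) := by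
  have h : ∀ b (L : ℝ), -(μ.dist W b) * L = ∑ a, if g a = b then -(μ.dist V a) * L else 0 :=
    fun b L => by
      rw [μ.dist_eq_sum_of_comp hW b, neg_mul, Finset.sum_mul, ← Finset.sum_neg_distrib]
      exact Finset.sum_congr rfl fun a _ => by split_ifs <;> simp
  rw [H, Finset.sum_congr rfl fun b _ => h b _, Finset.sum_comm]
  simp

lemma H_le_of_comp (hW : ∀ ω, W ω = g (V ω)) : μ.H W ≤ μ.H V := by
  rw [μ.H_eq_sum_of_comp hW, H]
  refine Finset.sum_le_sum fun a _ => ?_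
  rcases (μ.dist_nonneg V a).eq_or_lt with h0 | hpos
  · simp [← h0]
  · simp only [neg_mul, neg_le_neg_iff]
    exact mul_le_mul_of_nonneg_left
      (Real.logb_le_logb_of_le one_lt_two hpos (μ.dist_le_dist_of_comp hW a)) hpos.le

lemma H_eq_of_comp_of_comp {e : α → β} {d : β → α}
    (hW : ∀ ω, W ω = e (V ω)) (hV : ∀ ω, V ω = d (W ω)) : μ.H W = μ.H V :=
  le_antisymm (μ.H_le_of_comp hW) (μ.H_le_of_comp hV)

end Relabel

lemma cmi_eq_sum (A : Ω → α) (B : Ω → β) (C : Ω → γ) :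
    μ.cmi A B C = ∑ t : α × β × γ,
      μ.dist (fun ω => (A ω, B ω, C ω)) t *
        (Real.logb 2 (μ.dist (fun ω => (A ω, B ω, C ω)) t)
          + Real.logb 2 (μ.dist C t.2.2)
          - Real.logb 2 (μ.dist (fun ω => (A ω, C ω)) (t.1, t.2.2))
          - Real.logb 2 (μ.dist (fun ω => (B ω, C ω)) (t.2.1, t.2.2))) := by
  have hAC := μ.H_eq_sum_of_comp (W := fun ω => (A ω, C ω)) (g := fun t => (t.1, t.2.2))
    (V := fun ω => (A ω, B ω, C ω)) fun _ => rfl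
  have hBC := μ.H_eq_sum_of_comp (W := fun ω => (B ω, C ω)) (g := fun t => (t.2.1, t.2.2))
    (V := fun ω => (A ω, B ω, C ω)) fun _ => rfl
  have hABC := μ.H_eq_sum_of_comp (W := fun ω => (A ω, B ω, C ω)) (g := id)
    (V := fun ω => (A ω, B ω, C ω)) fun _ => rfl
  have hC := μ.H_eq_sum_of_comp (W := C) (g := fun t => t.2.2)
    (V := fun ω => (A ω, B ω, C ω)) fun _ => rfl
  rw [cmi, H2, H2, hAC, hBC, hABC, hC, ← Finset.sum_add_distrib, ← Finset.sum_sub_distrib,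
    ← Finset.sum_sub_distrib]
  exact Finset.sum_congr rfl fun t _ => by simp only [id]; ring

lemma sum_dist_pair_mul_dist_pair_div_dist (A : Ω → α) (B : Ω → β) (C : Ω → γ) :
    ∑ t : α × β × γ, μ.dist (fun ω => (A ω, C ω)) (t.1, t.2.2)
      * μ.dist (fun ω => (B ω, C ω)) (t.2.1, t.2.2) / μ.dist C t.2.2 = 1 := by
  calc _ = ∑ c : γ, (∑ a, μ.dist (fun ω => (A ω, C ω)) (a, c))
          * (∑ b, μ.dist (fun ω => (B ω, C ω)) (b, c)) / μ.dist C c := by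
        simp only [Fintype.sum_prod_type, Finset.sum_mul, Finset.mul_sum, Finset.sum_div]
        rw [Finset.sum_comm]
        exact (Finset.sum_congr rfl fun b _ => Finset.sum_comm).trans Finset.sum_comm
    _ = ∑ c, μ.dist C c := by
        simp only [sum_dist_pair_left, mul_self_div_self]
    _ = 1 := μ.sum_dist C

lemma cmi_nonneg (A : Ω → α) (B : Ω → β) (C : Ω → γ) : 0 ≤ μ.cmi A B C := by
  set V := fun ω => (A ω, B ω, C ω)
  rw [cmi_eq_sum]
  calc (0 : ℝ)
      = (∑ t, μ.dist V t - ∑ t : α × β × γ, μ.dist (fun ω => (A ω, C ω)) (t.1, t.2.2)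
          * μ.dist (fun ω => (B ω, C ω)) (t.2.1, t.2.2) / μ.dist C t.2.2) / Real.log 2 := by
        rw [sum_dist, sum_dist_pair_mul_dist_pair_div_dist, sub_self, zero_div]
    _ = ∑ t, (μ.dist V t - μ.dist (fun ω => (A ω, C ω)) (t.1, t.2.2)
          * μ.dist (fun ω => (B ω, C ω)) (t.2.1, t.2.2) / μ.dist C t.2.2) / Real.log 2 := by
        rw [← Finset.sum_sub_distrib, Finset.sum_div]
    _ ≤ _ := Finset.sum_le_sum fun t _ => sub_div_log_two_le_mul_logb (μ.dist_nonneg V t)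
        (μ.dist_le_dist_of_comp (g := fun t => (t.1, t.2.2)) (fun _ => rfl) t)
        (μ.dist_le_dist_of_comp (g := fun t => (t.2.1, t.2.2)) (fun _ => rfl) t)
        (μ.dist_le_dist_of_comp (g := fun t => t.2.2) (fun _ => rfl) t)

lemma dist_pair (A : Ω → α) (B : Ω → β) (a : α) (b : β) :
    μ.dist (fun ω => (A ω, B ω)) (a, b) = μ.pr (fun ω => A ω = a ∧ B ω = b) :=
  μ.pr_congr fun _ => Prod.mk.injEq .. ▸ Iff.rfl

lemma mi_eq_sum (A : Ω → α) (B : Ω → β) :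
    μ.mi A B = ∑ t : α × β, μ.dist (fun ω => (A ω, B ω)) t *
      (Real.logb 2 (μ.dist (fun ω => (A ω, B ω)) t)
        - Real.logb 2 (μ.dist A t.1) - Real.logb 2 (μ.dist B t.2)) := by
  have hA := μ.H_eq_sum_of_comp (W := A) (g := Prod.fst) (V := fun ω => (A ω, B ω)) fun _ => rfl
  have hB := μ.H_eq_sum_of_comp (W := B) (g := Prod.snd) (V := fun ω => (A ω, B ω)) fun _ => rfl
  have hAB := μ.H_eq_sum_of_comp (W := fun ω => (A ω, B ω)) (g := id)
    (V := fun ω => (A ω, B ω)) fun _ => rfl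
  rw [mi, H2, hA, hB, hAB, ← Finset.sum_add_distrib, ← Finset.sum_sub_distrib]
  exact Finset.sum_congr rfl fun t _ => by simp only [id]; ring

lemma mi_eq_zero_of_indep (A : Ω → α) (B : Ω → β)
    (h : ∀ a b, μ.pr (fun ω => A ω = a ∧ B ω = b) = μ.dist A a * μ.dist B b) :
    μ.mi A B = 0 := by
  rw [mi_eq_sum]
  refine Finset.sum_eq_zero fun t _ => ?_
  set V := fun ω => (A ω, B ω)
  rcases (μ.dist_nonneg V t).eq_or_lt with h0 | hpos
  · rw [← h0, zero_mul]
  have hA : 0 < μ.dist A t.1 :=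
    hpos.trans_le (μ.dist_le_dist_of_comp (V := V) (g := Prod.fst) (fun _ => rfl) t)
  have hB : 0 < μ.dist B t.2 :=
    hpos.trans_le (μ.dist_le_dist_of_comp (V := V) (g := Prod.snd) (fun _ => rfl) t)
  rw [μ.dist_pair A B t.1 t.2, h, Real.logb_mul hA.ne' hB.ne']
  ring

/-- `h` says that `A — C — B` is a Markov chain. -/
lemma cmi_eq_zero_of_markov (A : Ω → α) (B : Ω → β) (C : Ω → γ)
    (h : ∀ a c b, μ.pr (fun ω => A ω = a ∧ C ω = c ∧ B ω = b) * μ.pr (fun ω => C ω = c)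
      = μ.pr (fun ω => A ω = a ∧ C ω = c) * μ.pr (fun ω => C ω = c ∧ B ω = b)) :
    μ.cmi A B C = 0 := by
  rw [cmi_eq_sum]
  refine Finset.sum_eq_zero fun t _ => ?_
  obtain ⟨a, b, c⟩ := t
  dsimp only
  set V := fun ω => (A ω, B ω, C ω)
  rcases (μ.dist_nonneg V (a, b, c)).eq_or_lt with h0 | hpos
  · rw [← h0, zero_mul]
  have hmarkov : μ.dist V (a, b, c) * μ.dist C c
      = μ.dist (fun ω => (A ω, C ω)) (a, c) * μ.dist (fun ω => (B ω, C ω)) (b, c) := by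
    have hABC : μ.dist V (a, b, c) = μ.pr (fun ω => A ω = a ∧ C ω = c ∧ B ω = b) :=
      μ.pr_congr fun ω => by simp only [V, Prod.mk.injEq]; tauto
    rw [hABC, μ.dist_pair A C, μ.dist_pair B C,
      μ.pr_congr (F := fun ω => C ω = c ∧ B ω = b) fun _ => and_comm]
    exact h a c b
  have hAC : 0 < μ.dist (fun ω => (A ω, C ω)) (a, c) := hpos.trans_le
    (μ.dist_le_dist_of_comp (V := V) (g := fun t => (t.1, t.2.2)) (fun _ => rfl) _)
  have hBC : 0 < μ.dist (fun ω => (B ω, C ω)) (b, c) := hpos.trans_le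
    (μ.dist_le_dist_of_comp (V := V) (g := fun t => (t.2.1, t.2.2)) (fun _ => rfl) _)
  have hC : 0 < μ.dist C c := hpos.trans_le
    (μ.dist_le_dist_of_comp (V := V) (g := fun t => t.2.2) (fun _ => rfl) _)
  rw [sub_sub, ← Real.logb_mul hpos.ne' hC.ne', ← Real.logb_mul hAC.ne' hBC.ne', hmarkov,
    sub_self, mul_zero]

lemma mi_pair_eq_mi_add_cmi (A : Ω → α) (B : Ω → β) (C : Ω → γ) :
    μ.mi A (fun ω => (B ω, C ω)) = μ.mi A C + μ.cmi A B C := by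
  unfold mi cmi H2
  ring

lemma mi_pair_comm (A : Ω → α) (B : Ω → β) (C : Ω → γ) :
    μ.mi A (fun ω => (B ω, C ω)) = μ.mi A (fun ω => (C ω, B ω)) := by
  unfold mi H2
  dsimp only
  rw [μ.H_eq_of_comp_of_comp (W := fun ω => (B ω, C ω)) (V := fun ω => (C ω, B ω))
      (e := Prod.swap) (d := Prod.swap) (fun _ => rfl) (fun _ => rfl),
    μ.H_eq_of_comp_of_comp (W := fun ω => (A ω, B ω, C ω)) (V := fun ω => (A ω, C ω, B ω))
      (e := fun t => (t.1, t.2.swap)) (d := fun t => (t.1, t.2.swap))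
      (fun _ => rfl) (fun _ => rfl)]

lemma mi_le_mi_of_cmi_eq_zero {A : Ω → α} {B : Ω → β} {C : Ω → γ} (h : μ.cmi A B C = 0) :
    μ.mi A B ≤ μ.mi A C := by
  have hBC := μ.mi_pair_eq_mi_add_cmi A B C
  have hCB := μ.mi_pair_eq_mi_add_cmi A C B
  have := μ.cmi_nonneg A C B
  rw [μ.mi_pair_comm, h] at hBC
  linarith

lemma cmi_le_condH (A : Ω → α) (B : Ω → β) (C : Ω → γ) : μ.cmi A B C ≤ μ.condH B C := by
  have := μ.H_le_of_comp (W := fun ω => (A ω, C ω)) (g := fun t => (t.1, t.2.2))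
    (V := fun ω => (A ω, B ω, C ω)) fun _ => rfl
  unfold cmi condH H2
  linarith

lemma mi_pair_le_condH_of_mi_eq_zero {A : Ω → α} (B : Ω → β) {C : Ω → γ} (h : μ.mi A C = 0) :
    μ.mi A (fun ω => (B ω, C ω)) ≤ μ.condH B C := by
  rw [mi_pair_eq_mi_add_cmi, h, zero_add]
  exact μ.cmi_le_condH A B C

lemma condH_le_of_comp (A : Ω → α) {V : Ω → β} {W : Ω → γ} {h : β → γ}
    (hW : ∀ ω, W ω = h (V ω)) : μ.condH A V ≤ μ.condH A W := by
  have hVW := μ.H_eq_of_comp_of_comp (W := fun ω => (V ω, W ω)) (e := fun v => (v, h v))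
    (d := Prod.fst) (fun ω => by rw [hW]) (fun _ => rfl)
  have hAVW := μ.H_eq_of_comp_of_comp (W := fun ω => (A ω, V ω, W ω))
    (e := fun t => (t.1, t.2, h t.2)) (d := fun t => (t.1, t.2.1)) (fun ω => by rw [hW])
    (fun _ => rfl)
  have := μ.cmi_nonneg A V W
  unfold cmi H2 at this
  unfold condH H2
  linarith

lemma cmi_eq_condH_of_det {A : Ω → α} {B : Ω → β} {C : Ω → γ} (ψ : α → γ → β)
    (hB : ∀ ω, B ω = ψ (A ω) (C ω)) : μ.cmi A B C = μ.condH B C := by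
  have := μ.H_eq_of_comp_of_comp (W := fun ω => (A ω, B ω, C ω))
    (e := fun t => (t.1, ψ t.1 t.2, t.2)) (d := fun t => (t.1, t.2.2)) (fun ω => by rw [hB])
    (fun _ => rfl)
  unfold cmi condH H2
  rw [this]
  ring

lemma condH_pi_eq_sum {n : ℕ} (X : Ω → Fin n → α) (Z : Ω → γ) :
    μ.condH X Z = ∑ i : Fin n,
      μ.condH (fun ω => X ω i) (fun ω => ((fun j : {j : Fin n // j < i} => X ω j), Z ω)) := by
  set F : ℕ → ℝ := fun k =>
    μ.H (fun ω => ((fun j : {j : Fin n // (j : ℕ) < k} => X ω j), Z ω))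
  have hF0 : F 0 = μ.H Z :=
    μ.H_eq_of_comp_of_comp (e := fun z => (fun j => absurd j.2 (Nat.not_lt_zero _), z))
      (d := Prod.snd) (fun ω => Prod.ext (funext fun j => absurd j.2 (Nat.not_lt_zero _)) rfl)
      (fun _ => rfl)
  have hFn : F n = μ.H2 X Z :=
    μ.H_eq_of_comp_of_comp (e := fun t => (fun j => t.1 j, t.2))
      (d := fun t => (fun j => t.1 ⟨j, j.2⟩, t.2)) (fun _ => rfl) (fun _ => rfl)
  have hstep : ∀ i : Fin n, F (i + 1) - F i = μ.condH (fun ω => X ω i)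
      (fun ω => ((fun j : {j : Fin n // j < i} => X ω j), Z ω)) := fun i => by
    have : F (i + 1) = μ.H2 (fun ω => X ω i)
        (fun ω => ((fun j : {j : Fin n // j < i} => X ω j), Z ω)) :=
      μ.H_eq_of_comp_of_comp
        (e := fun t => (fun j => if h : (j : ℕ) < i then t.2.1 ⟨j, h⟩ else t.1, t.2.2))
        (d := fun t => (t.1 ⟨i, lt_add_one _⟩, fun j => t.1 ⟨j, Nat.lt_succ_of_lt j.2⟩, t.2))
        (fun ω => Prod.ext (funext fun j => by
          dsimp only
          split_ifs with h
          · rfl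
          · exact congrArg (X ω) (Fin.ext (by omega))) rfl)
        (fun _ => rfl)
    rw [this]
    rfl
  rw [Finset.sum_congr rfl fun i _ => (hstep i).symm,
    Fin.sum_univ_eq_sum_range (fun k => F (k + 1) - F k), Finset.sum_range_sub, hFn, hF0]
  rfl

end FinProb

lemma exists_eq_comp_of_causal {Ω 𝒨 𝒳 𝒮 𝒯 : Type*} {n : ℕ} {M : Ω → 𝒨}
    {X : Ω → Fin n → 𝒳} {S : Ω → Fin n → 𝒮} {T : Ω → Fin n → 𝒯}
    (g : (i : Fin n) → ((j : Fin n) → j < i → 𝒳) → ((j : Fin n) → j ≤ i → 𝒮) → 𝒯)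
    (hT : ∀ ω i, T ω i = g i (fun j _ => X ω j) (fun j _ => S ω j))
    (f : (i : Fin n) → 𝒨 → ((j : Fin n) → j ≤ i → 𝒯) → 𝒳)
    (hX : ∀ ω i, X ω i = f i (M ω) (fun j _ => T ω j)) (i : Fin n) :
    ∃ ψ : 𝒨 → ({j : Fin n // j < i} → 𝒮) × ({j : Fin n // j < i} → 𝒳) × 𝒯 → 𝒳,
      ∀ ω, X ω i = ψ (M ω) ((fun j => S ω j), (fun j => X ω j), T ω i) := by
  -- `T_j` for `j < i` is recomputed by `g` from the past of `X` and `S`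
  refine ⟨fun m z => f i m fun j hj => if h : j < i
    then g j (fun k hk => z.2.1 ⟨k, hk.trans h⟩) (fun k hk => z.1 ⟨k, hk.trans_lt h⟩)
    else z.2.2, fun ω => ?_⟩
  rw [hX ω i]
  congr 1
  funext j hj
  split_ifs with h
  · exact hT ω j
  · rw [le_antisymm hj (not_lt.1 h)]

/-- If `M — (Xⁿ,Sⁿ) — Yⁿ` is a Markov chain, `Sⁿ ⫫ M`, each `T_i` is a
function of `(X^{i−1}, S^i)`, and each `X_i` is a function of `(M, T^i)`, then
`I(M; Yⁿ) ≤ Σᵢ I(M, Y^{i−1}; X_i | S^{i−1}, X^{i−1}, T_i)`. -/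
theorem stmt8 {Ω 𝒨 𝒳 𝒮 𝒴 𝒯 : Type} [Fintype Ω] [Fintype 𝒨] [Fintype 𝒳] [Fintype 𝒮]
    [Fintype 𝒴] [Fintype 𝒯] (μ : FinProb Ω) (n : ℕ)
    (M : Ω → 𝒨) (X : Ω → Fin n → 𝒳) (S : Ω → Fin n → 𝒮) (Y : Ω → Fin n → 𝒴)
    (T : Ω → Fin n → 𝒯)
    (hMarkov : ∀ (m : 𝒨) (xs : (Fin n → 𝒳) × (Fin n → 𝒮)) (y : Fin n → 𝒴),
      μ.pr (fun ω => M ω = m ∧ (X ω, S ω) = xs ∧ Y ω = y) * μ.pr (fun ω => (X ω, S ω) = xs)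
        = μ.pr (fun ω => M ω = m ∧ (X ω, S ω) = xs)
            * μ.pr (fun ω => (X ω, S ω) = xs ∧ Y ω = y))
    (hindep : ∀ (m : 𝒨) (s : Fin n → 𝒮),
      μ.pr (fun ω => M ω = m ∧ S ω = s) = μ.dist M m * μ.dist S s)
    (g : (i : Fin n) → ((j : Fin n) → j < i → 𝒳) → ((j : Fin n) → j ≤ i → 𝒮) → 𝒯)
    (hT : ∀ ω i, T ω i = g i (fun j _ => X ω j) (fun j _ => S ω j))
    (f : (i : Fin n) → 𝒨 → ((j : Fin n) → j ≤ i → 𝒯) → 𝒳)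
    (hX : ∀ ω i, X ω i = f i (M ω) (fun j _ => T ω j)) :
    μ.mi M Y ≤ ∑ i : Fin n,
      μ.cmi (fun ω => (M ω, fun j : {j : Fin n // j < i} => Y ω j))
            (fun ω => X ω i)
            (fun ω => ((fun j : {j : Fin n // j < i} => S ω j),
                       (fun j : {j : Fin n // j < i} => X ω j), T ω i)) := by
  calc μ.mi M Y
      ≤ μ.mi M (fun ω => (X ω, S ω)) :=
        μ.mi_le_mi_of_cmi_eq_zero (μ.cmi_eq_zero_of_markov M Y _ hMarkov)
    _ ≤ μ.condH X S := μ.mi_pair_le_condH_of_mi_eq_zero X (μ.mi_eq_zero_of_indep M S hindep)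
    _ = ∑ i : Fin n, μ.condH (fun ω => X ω i)
          (fun ω => ((fun j : {j : Fin n // j < i} => X ω j), S ω)) := μ.condH_pi_eq_sum X S
    _ ≤ ∑ i : Fin n, μ.condH (fun ω => X ω i)
          (fun ω => ((fun j : {j : Fin n // j < i} => S ω j),
                     (fun j : {j : Fin n // j < i} => X ω j), T ω i)) :=
        Finset.sum_le_sum fun i _ => μ.condH_le_of_comp _
          (h := fun t => ((fun j => t.2 j), t.1, g i (fun j hj => t.1 ⟨j, hj⟩) (fun j _ => t.2 j)))
          fun ω => by rw [hT]
    _ = _ := Finset.sum_congr rfl fun i _ => by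
        obtain ⟨ψ, hψ⟩ := exists_eq_comp_of_causal g hT f hX i
        exact (μ.cmi_eq_condH_of_det (fun a z => ψ a.1 z) hψ).symm
end
end

section
/- For the binary two-component channel: if A, Ũ are independent fair bits, S = (S⁽⁰⁾,S⁽¹⁾) uniform on {0,1}² independent of (A,Ũ), and the input is X = (A, Ũ ⊕ S⁽⁰⁾), then I(A, Ũ; Y) = 3/2 bits, where Y = (A, Ũ ⊕ S⁽⁰⁾ ⊕ S⁽ᴬ⁾). -/
open scoped BigOperators Classical
open Real Finset

noncomputable section

/-! The triple `T = (A, Ũ, S)` is uniform on 16 points and every variable in sight is a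
function `g ∘ T`, so `H(g ∘ T)` is the average over `t` of `log₂ (16 / |g⁻¹ (g t)|)`.
The fibres of `(A, Ũ)` and of `Y` have 4 points each. The fibres of `((A, Ũ), Y)` have 4 points
when `A = 0`, where `Y` is determined by `Ũ`, and 2 points when `A = 1`, where `S⁽⁰⁾ ⊕ S⁽¹⁾` is a
fresh fair bit. Hence `I = 2 + 2 - 5/2 = 3/2`. -/

namespace FinProb

variable {Ω τ α : Type*} [Fintype Ω] [Fintype τ] [Fintype α] [DecidableEq α] (μ : FinProb Ω)

theorem dist_comp_s15 (T : Ω → τ) (g : τ → α) (x : α) :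
    μ.dist (fun ω => g (T ω)) x = ∑ t with g t = x, μ.dist T t := by
  simp only [dist, pr]
  rw [Finset.sum_comm]
  refine Finset.sum_congr rfl fun ω _ => ?_
  simp only [eq_comm, Finset.sum_ite_eq', Finset.mem_filter, Finset.mem_univ, true_and]

variable {μ} {T : Ω → τ}

theorem dist_comp_of_uniform (hT : ∀ t, μ.dist T t = 1 / Fintype.card τ) (g : τ → α) (x : α) :
    μ.dist (fun ω => g (T ω)) x = #{t | g t = x} / Fintype.card τ := by
  rw [dist_comp_s15, Finset.sum_congr rfl fun t _ => hT t, Finset.sum_const, nsmul_eq_mul,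
    mul_one_div]

theorem H_comp_of_uniform (hT : ∀ t, μ.dist T t = 1 / Fintype.card τ) (g : τ → α) :
    μ.H (fun ω => g (T ω)) =
      (∑ t, logb 2 (Fintype.card τ / #{s | g s = g t})) / Fintype.card τ := by
  have hfiber (x : α) : ∑ t with g t = x, logb 2 (Fintype.card τ / #{s | g s = g t}) =
      #{t | g t = x} * logb 2 (Fintype.card τ / #{t | g t = x}) := by
    rw [Finset.sum_congr rfl fun t ht => by rw [(Finset.mem_filter.1 ht).2], Finset.sum_const,
      nsmul_eq_mul]
  rw [H, ← Finset.sum_fiberwise Finset.univ g, Finset.sum_div]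
  refine Finset.sum_congr rfl fun x _ => ?_
  rw [hfiber, dist_comp_of_uniform hT, ← inv_div (#{t | g t = x} : ℝ), logb_inv]
  ring

theorem H_comp_of_card_fiber (hT : ∀ t, μ.dist T t = 1 / Fintype.card τ) (g : τ → α) {k : ℕ}
    (hk : ∀ t, #{s | g s = g t} = k) :
    μ.H (fun ω => g (T ω)) = logb 2 (Fintype.card τ / k) := by
  rw [H_comp_of_uniform hT]
  simp only [hk, Finset.sum_const, Finset.card_univ, nsmul_eq_mul]
  rcases eq_or_ne (Fintype.card τ : ℝ) 0 with h | h
  · simp [h]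
  · exact mul_div_cancel_left₀ _ h

end FinProb

def channelOutput (t : Bool × Bool × (Bool × Bool)) : Bool × Bool :=
  (t.1, xor (xor t.2.1 t.2.2.1) (if t.1 then t.2.2.2 else t.2.2.1))

theorem card_fiber_AUt (t : Bool × Bool × (Bool × Bool)) :
    #{s : Bool × Bool × (Bool × Bool) | (s.1, s.2.1) = (t.1, t.2.1)} = 4 := by
  revert t; decide

theorem card_fiber_channelOutput (t : Bool × Bool × (Bool × Bool)) :
    #{s | channelOutput s = channelOutput t} = 4 := by
  revert t; decide

theorem card_fiber_AUt_channelOutput (t : Bool × Bool × (Bool × Bool)) :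
    #{s | ((s.1, s.2.1), channelOutput s) = ((t.1, t.2.1), channelOutput t)} =
      if t.1 then 2 else 4 := by
  revert t; decide

/-- With `A, Ũ` independent fair bits and `S` uniform on `{0,1}²`
independent of `(A,Ũ)`, input `X = (A, Ũ ⊕ S⁽⁰⁾)` gives
`Y = (A, Ũ ⊕ S⁽⁰⁾ ⊕ S⁽ᴬ⁾)` and `I(A,Ũ; Y) = 3/2` bits. -/
theorem stmt15 {Ω : Type} [Fintype Ω] (μ : FinProb Ω)
    (A Ut : Ω → Bool) (S : Ω → Bool × Bool) (Y : Ω → Bool × Bool)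
    (hjoint : ∀ (a u : Bool) (s : Bool × Bool),
      μ.pr (fun ω => A ω = a ∧ Ut ω = u ∧ S ω = s) = 1 / 16)
    (hY : ∀ ω, Y ω = (A ω, xor (xor (Ut ω) (S ω).1)
        (if A ω then (S ω).2 else (S ω).1))) :
    μ.mi (fun ω => (A ω, Ut ω)) Y = 3 / 2 := by
  obtain rfl : Y = fun ω => channelOutput (A ω, Ut ω, S ω) := funext hY
  have hT (t : Bool × Bool × (Bool × Bool)) :
      μ.dist (fun ω => (A ω, Ut ω, S ω)) t = 1 / Fintype.card (Bool × Bool × (Bool × Bool)) := by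
    obtain ⟨a, u, s⟩ := t
    simpa [FinProb.dist, Prod.ext_iff] using hjoint a u s
  have logb_four : logb 2 4 = 2 := by rw [logb_eq_iff_rpow_eq] <;> norm_num
  have logb_eight : logb 2 8 = 3 := by rw [logb_eq_iff_rpow_eq] <;> norm_num
  have hAUt : μ.H (fun ω => (A ω, Ut ω)) = 2 := by
    rw [FinProb.H_comp_of_card_fiber hT (fun t => (t.1, t.2.1)) card_fiber_AUt]
    norm_num [logb_four]
  have hOutput : μ.H (fun ω => channelOutput (A ω, Ut ω, S ω)) = 2 := by
    rw [FinProb.H_comp_of_card_fiber hT channelOutput card_fiber_channelOutput]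
    norm_num [logb_four]
  have hJoint :
      μ.H2 (fun ω => (A ω, Ut ω)) (fun ω => channelOutput (A ω, Ut ω, S ω)) = 5 / 2 := by
    rw [FinProb.H2, FinProb.H_comp_of_uniform hT (fun t => ((t.1, t.2.1), channelOutput t))]
    simp only [card_fiber_AUt_channelOutput, Fintype.sum_prod_type, Fintype.sum_bool]
    norm_num [logb_four, logb_eight]
  rw [FinProb.mi, hAUt, hOutput, hJoint]
  norm_num
end
end
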